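/- arXiv:2601.17873 — 2 statements merged into one kernel-verified Lean document; each statement's English description precedes it below -/
import Mathlib

section
/- Stability protected phantom bound (kinematic form): for every β > 0, V ∈ ℝ, and all real X, H with H² + X ≠ 0, if X ≥ 0, P_X(X,H) ≥ 0, and ρ(X,H) > 0, then the equation of state w = P(X,H)/ρ(X,H) satisfies w ≥ −1, with equality if and only if X·P_X(X,H) = 0. -/
/-- Effective pressure `P(X,H) = X − V − β·X²/(H² + X)`. -/
noncomputable def Peff (β V X H : ℝ) : ℝ := X - V - β * X ^ 2 / (H ^ 2 + X)

/-- Effective energy density `ρ(X,H) = X + V − β·X²(3H² + X)/(H² + X)²`. -/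
noncomputable def rhoEff (β V X H : ℝ) : ℝ :=
  X + V - β * X ^ 2 * (3 * H ^ 2 + X) / (H ^ 2 + X) ^ 2

/-- Partial derivative of `P` with respect to `X`. -/
noncomputable def PX (β X H : ℝ) : ℝ :=
  1 - β * (2 * X * H ^ 2 + X ^ 2) / (H ^ 2 + X) ^ 2

/-- stability protected phantom bound (kinematic form): if `X ≥ 0`,
`P_X ≥ 0` and `ρ > 0`, then `w = P/ρ ≥ −1`, with equality iff `X·P_X = 0`. -/
theorem phantom_bound_kinematic (β V X H : ℝ) (hβ : 0 < β) (hden : H ^ 2 + X ≠ 0)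
    (hX : 0 ≤ X) (hPX : 0 ≤ PX β X H) (hρ : 0 < rhoEff β V X H) :
    -1 ≤ Peff β V X H / rhoEff β V X H ∧
    (Peff β V X H / rhoEff β V X H = -1 ↔ X * PX β X H = 0) := by
  have key : Peff β V X H + rhoEff β V X H = 2 * (X * PX β X H) := by
    unfold Peff rhoEff PX
    field_simp
    ring
  have hXPX : 0 ≤ X * PX β X H := mul_nonneg hX hPX
  constructor
  · rw [le_div_iff₀ hρ]
    nlinarith
  · rw [div_eq_iff hρ.ne']
    constructor
    · intro h; nlinarith
    · intro h; nlinarith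
end

section
/- Strict phantom bound under ghost freedom: for every β > 0, V ∈ ℝ, and all real X > 0 and H ≠ 0, if M(X,H) > 0 and ρ(X,H) > 0, then the equation of state parameter w = P(X,H)/ρ(X,H) satisfies w > −1 strictly. -/
/-- Kinetic response function `M(X,H) = ∂ρ/∂X`. -/
noncomputable def Mresp (β X H : ℝ) : ℝ :=
  1 - β * X * (6 * H ^ 4 + 3 * H ^ 2 * X + X ^ 2) / (H ^ 2 + X) ^ 3

/-!
Since `w > -1` is `P + ρ > 0` once `ρ > 0`, and `V` cancels in `P + ρ`, everything rests on
`(H² + X)² (P + ρ) = 2X ((H² + X)² − β X (2H² + X))`. Ghost freedom `M > 0` reads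
`β X (6H⁴ + 3H²X + X²) < (H² + X)³`, and `(2H² + X)(H² + X) = 2H⁴ + 3H²X + X²` is smaller than
`6H⁴ + 3H²X + X²`, so dividing by `H² + X` gives exactly the positivity of the bracket.
-/

theorem Peff_add_rhoEff (β V X H : ℝ) (hD : H ^ 2 + X ≠ 0) :
    Peff β V X H + rhoEff β V X H =
      2 * X * ((H ^ 2 + X) ^ 2 - β * X * (2 * H ^ 2 + X)) / (H ^ 2 + X) ^ 2 := by
  unfold Peff rhoEff
  field_simp
  ring

theorem Mresp_pos_iff (β X H : ℝ) (hD : 0 < H ^ 2 + X) :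
    0 < Mresp β X H ↔ β * X * (6 * H ^ 4 + 3 * H ^ 2 * X + X ^ 2) < (H ^ 2 + X) ^ 3 := by
  rw [Mresp, sub_pos, div_lt_one (by positivity)]

theorem mul_lt_sq_of_Mresp_pos {β X H : ℝ} (hβ : 0 ≤ β) (hX : 0 < X)
    (hM : 0 < Mresp β X H) : β * X * (2 * H ^ 2 + X) < (H ^ 2 + X) ^ 2 := by
  have hD : 0 < H ^ 2 + X := by positivity
  have hM' := (Mresp_pos_iff β X H hD).mp hM
  have hquartic : 0 ≤ β * X * (4 * H ^ 4) := by positivity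
  refine lt_of_mul_lt_mul_right (a := H ^ 2 + X) ?_ hD.le
  calc β * X * (2 * H ^ 2 + X) * (H ^ 2 + X)
      = β * X * (6 * H ^ 4 + 3 * H ^ 2 * X + X ^ 2) - β * X * (4 * H ^ 4) := by ring
    _ < (H ^ 2 + X) ^ 3 := by linarith
    _ = (H ^ 2 + X) ^ 2 * (H ^ 2 + X) := by ring

theorem Peff_add_rhoEff_pos {β V X H : ℝ} (hβ : 0 ≤ β) (hX : 0 < X)
    (hM : 0 < Mresp β X H) : 0 < Peff β V X H + rhoEff β V X H := by
  have hD : 0 < H ^ 2 + X := by positivity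
  have hgap := sub_pos.mpr (mul_lt_sq_of_Mresp_pos hβ hX hM)
  rw [Peff_add_rhoEff β V X H hD.ne']
  positivity

theorem strict_phantom_bound_general (β V X H : ℝ) (hβ : 0 < β) (hX : 0 < X)
    (hM : 0 < Mresp β X H) (hρ : 0 < rhoEff β V X H) :
    -1 < Peff β V X H / rhoEff β V X H := by
  rw [lt_div_iff₀ hρ]
  linarith [Peff_add_rhoEff_pos (V := V) hβ.le hX hM]

/-- strict phantom bound under ghost freedom: if `X > 0`, `H ≠ 0`,
`M > 0` and `ρ > 0`, then `w = P/ρ > −1` strictly. -/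
theorem strict_phantom_bound (β V X H : ℝ) (hβ : 0 < β) (hX : 0 < X) (hH : H ≠ 0)
    (hM : 0 < Mresp β X H) (hρ : 0 < rhoEff β V X H) :
    -1 < Peff β V X H / rhoEff β V X H :=
  strict_phantom_bound_general β V X H hβ hX hM hρ
end
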